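/- Let 0 ≤ λ ≤ 1. If X is a one-sided λ-local spectral expander, then for every 0 ≤ k ≤ n−1 and every φ ∈ C^k_0(X,ℝ), ‖M⁺_k φ‖ ≤ ( (k+1)/(k+2) + (k+1)λ ) ‖φ‖. -/

import Mathlib

/-!
Framework: a pure `n`-dimensional finite weighted simplicial complex, following
Kaufman–Oppenheim, "High Order Random Walks: Beyond Spectral Gap".

A complex is given by its finset of faces (finsets of a vertex type `V`) together with
a weight function `m`.  We index levels by **cardinality**: `X.K c` is the set of faces
with `c` elements, i.e. the set `X(k)` of `k`-dimensional faces for `k = c - 1`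
(so `X(-1) = X.K 0`, and a pure `n`-dimensional complex has top level `X.K (n+1)`).
-/

noncomputable section

open Finset

/-- The data of a weighted simplicial complex: a finite family of faces and a weight. -/
structure WSC (V : Type*) [DecidableEq V] where
  faces : Finset (Finset V)
  m : Finset V → ℝ

namespace WSC

variable {V : Type*} [DecidableEq V]

/-- `X.IsWSC n` : `X` is a pure `n`-dimensional finite weighted simplicial complex:
the faces form a nonempty downward-closed family, every face is contained in a face with
`n+1` elements (and no face has more), the weights are positive, and the weight of every
face of cardinality `≤ n` is the sum of the weights of the faces covering it. -/
def IsWSC (X : WSC V) (n : ℕ) : Prop :=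
  ∅ ∈ X.faces ∧
  (∀ ⦃σ τ : Finset V⦄, σ ∈ X.faces → τ ⊆ σ → τ ∈ X.faces) ∧
  (∀ ⦃σ⦄, σ ∈ X.faces → σ.card ≤ n + 1) ∧
  (∀ ⦃σ⦄, σ ∈ X.faces → ∃ η ∈ X.faces, σ ⊆ η ∧ η.card = n + 1) ∧
  (∀ ⦃σ⦄, σ ∈ X.faces → 0 < X.m σ) ∧
  (∀ ⦃τ⦄, τ ∈ X.faces → τ.card ≤ n →
    X.m τ = ∑ σ ∈ X.faces.filter (fun σ => τ ⊆ σ ∧ σ.card = τ.card + 1), X.m σ)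

/-- `X.K c` : the faces with `c` elements, i.e. `X(c-1)` in dimension indexing. -/
def K (X : WSC V) (c : ℕ) : Finset (Finset V) := X.faces.filter (fun σ => σ.card = c)

/-- The weighted inner product on cochains supported on the faces with `c` elements. -/
def inn (X : WSC V) (c : ℕ) (φ ψ : Finset V → ℝ) : ℝ :=
  ∑ σ ∈ X.K c, X.m σ * (φ σ * ψ σ)

/-- The squared norm of a cochain on the faces with `c` elements. -/
def normSq (X : WSC V) (c : ℕ) (φ : Finset V → ℝ) : ℝ := X.inn c φ φ

/-- The norm of a cochain on the faces with `c` elements. -/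
def norm (X : WSC V) (c : ℕ) (φ : Finset V → ℝ) : ℝ := Real.sqrt (X.normSq c φ)

/-- `X.cochainZero c φ` : φ belongs to `C^{c-1}_0 (X, ℝ)`, i.e. it is orthogonal to the
constant functions at level `c`. -/
def cochainZero (X : WSC V) (c : ℕ) (φ : Finset V → ℝ) : Prop :=
  ∑ σ ∈ X.K c, X.m σ * φ σ = 0

/-- The signless differential, from cochains at level `c` to cochains at level `c+1`:
`(d φ)(σ) = ∑_{τ ∈ X(c-1), τ ⊂ σ} φ(τ)`. -/
def d (X : WSC V) (c : ℕ) (φ : Finset V → ℝ) : Finset V → ℝ :=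
  fun σ => ∑ τ ∈ (X.K c).filter (fun τ => τ ⊆ σ), φ τ

/-- The (explicit formula for the) adjoint of the signless differential, from cochains at
level `c+1` to cochains at level `c`: `(d* ψ)(τ) = ∑_{σ ⊇ τ} (m σ / m τ) ψ(σ)`. -/
def dStar (X : WSC V) (c : ℕ) (ψ : Finset V → ℝ) : Finset V → ℝ :=
  fun τ => ∑ σ ∈ (X.K (c + 1)).filter (fun σ => τ ⊆ σ), (X.m σ / X.m τ) * ψ σ

/-- The (lazy) upper random walk operator `M⁺` on cochains at level `c`
(i.e. on `k`-cochains for `k = c-1`; note `k + 2 = c + 1`). -/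
def Mup (X : WSC V) (c : ℕ) (φ : Finset V → ℝ) : Finset V → ℝ :=
  fun τ => (1 / ((c : ℝ) + 1)) * φ τ +
    ∑ τ' ∈ (X.K c).filter (fun τ' => τ ∪ τ' ∈ X.K (c + 1)),
      (X.m (τ ∪ τ') / (((c : ℝ) + 1) * X.m τ)) * φ τ'

/-- The lower random walk operator `M⁻` on cochains at level `c`
(i.e. on `k`-cochains for `k = c-1`; note `k + 1 = c`). -/
def Mdown (X : WSC V) (c : ℕ) (φ : Finset V → ℝ) : Finset V → ℝ :=
  fun τ => (∑ η ∈ (X.K (c - 1)).filter (fun η => η ⊆ τ), X.m τ / ((c : ℝ) * X.m η)) * φ τ +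
    ∑ τ' ∈ (X.K c).filter (fun τ' => τ' ≠ τ ∧ τ ∩ τ' ∈ X.K (c - 1)),
      (X.m τ' / ((c : ℝ) * X.m (τ ∩ τ'))) * φ τ'

/-- The non-lazy upper random walk operator `(M')⁺ = ((k+2)/(k+1)) M⁺ - (1/(k+1)) I`
on cochains at level `c = k+1`. -/
def Mup' (X : WSC V) (c : ℕ) (φ : Finset V → ℝ) : Finset V → ℝ :=
  fun τ => (((c : ℝ) + 1) / (c : ℝ)) * X.Mup c φ τ - (1 / (c : ℝ)) * φ τ

/-- The link `X_τ` of a face `τ`, with the induced weight `m_τ (η) = m (τ ∪ η)`. -/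
def link (X : WSC V) (τ : Finset V) : WSC V where
  faces := X.faces.filter (fun η => η ∩ τ = ∅ ∧ τ ∪ η ∈ X.faces)
  m := fun η => X.m (τ ∪ η)

/-- The localization `φ_τ (η) = φ (τ ∪ η)` of a cochain `φ` to the link of `τ`. -/
def localize (φ : Finset V → ℝ) (τ : Finset V) : Finset V → ℝ := fun η => φ (τ ∪ η)

/-- The underlying graph (1-skeleton) of a complex. -/
def skeleton (Y : WSC V) : SimpleGraph {v : V // ({v} : Finset V) ∈ Y.faces} where
  Adj u w := u ≠ w ∧ ({(u : V), (w : V)} : Finset V) ∈ Y.faces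
  symm := by
    constructor
    intro u w h
    refine ⟨h.1.symm, ?_⟩
    rw [Finset.pair_comm]
    exact h.2
  loopless := by constructor; intro u h; exact h.1 rfl

/-- All links of `X` of dimension `≥ 1` (including `X` itself, as the link of `∅`)
have a connected underlying graph. -/
def LinksConnected (X : WSC V) (n : ℕ) : Prop :=
  ∀ c < n, ∀ τ ∈ X.K c, (X.link τ).skeleton.Connected

/-- The second largest eigenvalue of the self-adjoint operator `(M')⁺₀` on `C⁰(Y, ℝ)`,
via its Rayleigh-quotient characterization over the orthogonal complement of the
constant functions (the top eigenfunction). -/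
def secondEig (Y : WSC V) : ℝ :=
  sSup {r : ℝ | ∃ ψ : Finset V → ℝ, Y.normSq 1 ψ ≠ 0 ∧
    (∑ v ∈ Y.K 1, Y.m v * ψ v) = 0 ∧ r = Y.inn 1 (Y.Mup' 1 ψ) ψ / Y.normSq 1 ψ}

/-- The smallest eigenvalue of the self-adjoint operator `(M')⁺₀` on `C⁰(Y, ℝ)`,
via its Rayleigh-quotient characterization. -/
def smallestEig (Y : WSC V) : ℝ :=
  sInf {r : ℝ | ∃ ψ : Finset V → ℝ, Y.normSq 1 ψ ≠ 0 ∧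
    r = Y.inn 1 (Y.Mup' 1 ψ) ψ / Y.normSq 1 ψ}

/-- `μ_k = max_{τ ∈ X(k-1)} μ_τ` where `μ_τ` is the second largest eigenvalue of
`(M')⁺_{τ,0}`; faces `τ ∈ X(k-1)` have `k` elements. -/
def mu (X : WSC V) (k : ℕ) : ℝ :=
  sSup {r : ℝ | ∃ τ ∈ X.K k, r = (X.link τ).secondEig}

/-- `ν_k = min_{τ ∈ X(k-1)} ν_τ` where `ν_τ` is the smallest eigenvalue of
`(M')⁺_{τ,0}`; faces `τ ∈ X(k-1)` have `k` elements. -/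
def nu (X : WSC V) (k : ℕ) : ℝ :=
  sInf {r : ℝ | ∃ τ ∈ X.K k, r = (X.link τ).smallestEig}

/-- `X` is a one-sided `λ`-local spectral expander: `μ_k ≤ λ` for every `0 ≤ k ≤ n-1`. -/
def OneSided (X : WSC V) (n : ℕ) (lam : ℝ) : Prop := ∀ k < n, X.mu k ≤ lam

/-- `X` is a two-sided `λ`-local spectral expander: `μ_k ≤ λ` and `ν_k ≥ -λ`
for every `0 ≤ k ≤ n-1`. -/
def TwoSided (X : WSC V) (n : ℕ) (lam : ℝ) : Prop :=
  ∀ k < n, X.mu k ≤ lam ∧ -lam ≤ X.nu k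

end WSC

/-!
Write `E(f, g) = ∑ m(σ ∪ σ') f(σ') g(σ)` over ordered pairs of distinct `k`-faces spanning a
`(k+1)`-face (`upperAdjForm`). Then `⟨M⁺f, g⟩ = (⟨f, g⟩ + E(f, g)) / (k + 2) = ⟨df, dg⟩ / (k + 2)`,
so `M⁺` is positive semidefinite and preserves `C^k_0`, and Cauchy–Schwarz for the form
`⟨M⁺·, ·⟩` reduces the norm bound to the Rayleigh bound `⟨M⁺φ, φ⟩ ≤ β_k ‖φ‖²` on `C^k_0`,
where `β_k = (k+1)/(k+2) + (k+1)λ`.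

`E(φ, φ)` is the sum over `τ ∈ X(k-1)` of the level-one forms of the localizations `φ_τ` on the
links. Splitting `φ_τ` into its mean `(d*φ)(τ)` and a mean-zero part, `μ_τ ≤ λ` gives
`E(φ, φ) ≤ (k+1) λ ‖φ‖² + ‖d*φ‖²`. Finally `‖d*φ‖² = ⟨d d*φ, φ⟩` and
`‖d d*φ‖² = (k+1) ⟨M⁺ d*φ, d*φ⟩`, which the Rayleigh bound one level down controls since
`d*φ ∈ C^{k-1}_0`; so the Rayleigh bound follows by induction on `k`.
-/

lemma le_of_sq_le_mul {x y : ℝ} (hy : 0 ≤ y) (h : x ^ 2 ≤ y * x) : x ≤ y := by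
  nlinarith

namespace WSC

variable {V : Type*} [DecidableEq V] {X : WSC V} {n c : ℕ}

@[simp]
lemma mem_K {σ : Finset V} : σ ∈ X.K c ↔ σ ∈ X.faces ∧ σ.card = c := by
  simp [K]

@[simp]
lemma mem_link_faces {τ η : Finset V} :
    η ∈ (X.link τ).faces ↔ η ∈ X.faces ∧ η ∩ τ = ∅ ∧ τ ∪ η ∈ X.faces := by
  simp [link]

lemma disjoint_of_mem_link_faces {τ η : Finset V} (h : η ∈ (X.link τ).faces) : Disjoint τ η := by
  rw [Finset.disjoint_iff_inter_eq_empty, Finset.inter_comm]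
  exact (mem_link_faces.1 h).2.1

lemma cochainZero_iff_inn_one {f : Finset V → ℝ} :
    X.cochainZero c f ↔ X.inn c f (fun _ => 1) = 0 := by
  simp [cochainZero, inn]

def upperAdjForm (X : WSC V) (c : ℕ) (f g : Finset V → ℝ) : ℝ :=
  ∑ σ ∈ X.K c, ∑ σ' ∈ (X.K c).filter (fun σ' => σ ∪ σ' ∈ X.K (c + 1)),
    X.m (σ ∪ σ') * f σ' * g σ

lemma union_eq_of_ne {σ σ' ρ : Finset V} (hσ : σ.card = c) (hσ' : σ'.card = c)
    (hρ : ρ.card = c + 1) (h : σ ⊆ ρ) (h' : σ' ⊆ ρ) (hne : σ' ≠ σ) : σ ∪ σ' = ρ := by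
  refine Finset.eq_of_subset_of_card_le (Finset.union_subset h h') ?_
  have hlt : σ.card < (σ ∪ σ').card := by
    refine Finset.card_lt_card (Finset.ssubset_iff_subset_ne.2 ⟨Finset.subset_union_left, ?_⟩)
    intro heq
    exact hne (Finset.eq_of_subset_of_card_le (heq ▸ Finset.subset_union_right) (by omega))
  omega

lemma sum_adjacent_eq_sum_cofaces {σ : Finset V} (hσ : σ ∈ X.K c)
    (H : Finset V → Finset V → ℝ) :
    ∑ σ' ∈ (X.K c).filter (fun σ' => σ ∪ σ' ∈ X.K (c + 1)), H (σ ∪ σ') σ' =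
      ∑ ρ ∈ (X.K (c + 1)).filter (σ ⊆ ·), ∑ σ' ∈ ((X.K c).filter (· ⊆ ρ)).erase σ, H ρ σ' := by
  have hσc := (mem_K.1 hσ).2
  refine (Finset.sum_fiberwise_of_maps_to (g := (σ ∪ ·)) (fun σ' h => ?_) _).symm.trans
    (Finset.sum_congr rfl fun ρ hρ => ?_)
  · exact mem_filter.2 ⟨(mem_filter.1 h).2, Finset.subset_union_left⟩
  obtain ⟨hρ, hσρ⟩ := mem_filter.1 hρ
  rw [Finset.sum_congr rfl fun σ' h => by rw [(mem_filter.1 h).2]]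
  congr 1
  ext σ'
  simp only [mem_filter, mem_erase, mem_K]
  constructor
  · rintro ⟨⟨hσ', hu⟩, rfl⟩
    refine ⟨fun h => ?_, hσ', Finset.subset_union_right⟩
    rw [h, Finset.union_self] at hu
    omega
  · rintro ⟨hne, hσ', hσ'ρ⟩
    have hu := union_eq_of_ne hσc hσ'.2 (mem_K.1 hρ).2 hσρ hσ'ρ hne
    exact ⟨⟨hσ', hu ▸ mem_K.1 hρ⟩, hu⟩

lemma upperAdjForm_comm (f g : Finset V → ℝ) : X.upperAdjForm c f g = X.upperAdjForm c g f := by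
  unfold upperAdjForm
  simp only [Finset.sum_filter]
  rw [Finset.sum_comm]
  refine Finset.sum_congr rfl fun σ _ => Finset.sum_congr rfl fun σ' _ => ?_
  rw [Finset.union_comm]
  split_ifs <;> ring

lemma upperAdjForm_add_const (f : Finset V → ℝ) (a : ℝ) :
    X.upperAdjForm c (fun σ => f σ + a) (fun σ => f σ + a) =
      X.upperAdjForm c f f + a * X.upperAdjForm c f (fun _ => 1) +
        a * X.upperAdjForm c (fun _ => 1) f +
          a ^ 2 * X.upperAdjForm c (fun _ => 1) (fun _ => 1) := by
  simp only [upperAdjForm, Finset.mul_sum, ← Finset.sum_add_distrib]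
  exact Finset.sum_congr rfl fun _ _ => Finset.sum_congr rfl fun _ _ => by ring

lemma normSq_add_const (f : Finset V → ℝ) (a : ℝ) :
    X.normSq c (fun σ => f σ + a) =
      X.normSq c f + 2 * a * ∑ σ ∈ X.K c, X.m σ * f σ + a ^ 2 * ∑ σ ∈ X.K c, X.m σ := by
  simp only [normSq, inn, Finset.mul_sum, ← Finset.sum_add_distrib]
  exact Finset.sum_congr rfl fun _ _ => by ring

lemma link_secondEig_le_mu {τ : Finset V} (hτ : τ ∈ X.K c) : (X.link τ).secondEig ≤ X.mu c := by
  refine le_csSup (((X.K c).finite_toSet.image fun τ => (X.link τ).secondEig).bddAbove.mono ?_)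
    ⟨τ, hτ, rfl⟩
  rintro r ⟨τ', hτ', rfl⟩
  exact ⟨τ', hτ', rfl⟩

namespace IsWSC

variable (hX : X.IsWSC n)
include hX

lemma mem_faces_of_subset {σ τ : Finset V} (hσ : σ ∈ X.faces) (h : τ ⊆ σ) : τ ∈ X.faces :=
  hX.2.1 hσ h

lemma m_pos {σ : Finset V} (hσ : σ ∈ X.faces) : 0 < X.m σ :=
  hX.2.2.2.2.1 hσ

lemma m_pos_of_mem_K {σ : Finset V} (hσ : σ ∈ X.K c) : 0 < X.m σ :=
  hX.m_pos (mem_K.1 hσ).1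

lemma K_zero : X.K 0 = {∅} := by
  ext σ
  simp only [mem_K, Finset.card_eq_zero, Finset.mem_singleton]
  exact ⟨And.right, fun h => ⟨h ▸ hX.1, h⟩⟩

lemma m_eq_sum_cofaces (hc : c ≤ n) {τ : Finset V} (hτ : τ ∈ X.K c) :
    X.m τ = ∑ σ ∈ (X.K (c + 1)).filter (τ ⊆ ·), X.m σ := by
  obtain ⟨hτf, rfl⟩ := mem_K.1 hτ
  rw [hX.2.2.2.2.2 hτf hc]
  congr 1
  ext σ
  simp only [mem_filter, mem_K]
  tauto

lemma K_filter_subset {σ : Finset V} (hσ : σ ∈ X.faces) (j : ℕ) :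
    (X.K j).filter (· ⊆ σ) = σ.powersetCard j := by
  ext τ
  simp only [mem_filter, mem_K, mem_powersetCard]
  exact ⟨fun h => ⟨h.2, h.1.2⟩, fun h => ⟨⟨hX.mem_faces_of_subset hσ h.1, h.2⟩, h.1⟩⟩

lemma card_K_filter_subset {σ : Finset V} (hσ : σ ∈ X.K c) (j : ℕ) :
    ((X.K j).filter (· ⊆ σ)).card = c.choose j := by
  rw [hX.K_filter_subset (mem_K.1 hσ).1, card_powersetCard, (mem_K.1 hσ).2]

lemma sum_K_sum_cofaces (j : ℕ) (G : Finset V → ℝ) :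
    ∑ τ ∈ X.K j, ∑ σ ∈ (X.K c).filter (τ ⊆ ·), G σ = c.choose j * ∑ σ ∈ X.K c, G σ := by
  rw [Finset.sum_comm' (t' := X.K c) (s' := fun σ => (X.K j).filter (· ⊆ σ))
    (by simp only [mem_filter]; tauto), Finset.mul_sum]
  refine Finset.sum_congr rfl fun σ hσ => ?_
  rw [Finset.sum_const, hX.card_K_filter_subset hσ, nsmul_eq_mul]

lemma normSq_nonneg (f : Finset V → ℝ) : 0 ≤ X.normSq c f :=
  Finset.sum_nonneg fun _ hσ => mul_nonneg (hX.m_pos_of_mem_K hσ).le (mul_self_nonneg _)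

lemma inn_sq_le (f g : Finset V → ℝ) : X.inn c f g ^ 2 ≤ X.normSq c f * X.normSq c g :=
  Finset.sum_sq_le_sum_mul_sum_of_sq_le_mul _
    (fun _ hσ => mul_nonneg (hX.m_pos_of_mem_K hσ).le (mul_self_nonneg _))
    (fun _ hσ => mul_nonneg (hX.m_pos_of_mem_K hσ).le (mul_self_nonneg _))
    (fun _ _ => le_of_eq (by ring))

lemma sum_adjacent_m (hc : c ≤ n) {σ : Finset V} (hσ : σ ∈ X.K c) :
    ∑ σ' ∈ (X.K c).filter (fun σ' => σ ∪ σ' ∈ X.K (c + 1)), X.m (σ ∪ σ') = c * X.m σ := by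
  rw [sum_adjacent_eq_sum_cofaces hσ fun ρ _ => X.m ρ, hX.m_eq_sum_cofaces hc hσ,
    Finset.mul_sum]
  refine Finset.sum_congr rfl fun ρ hρ => ?_
  rw [Finset.sum_const, Finset.card_erase_of_mem, hX.card_K_filter_subset (mem_filter.1 hρ).1,
    Nat.choose_succ_self_right, nsmul_eq_mul]
  · push_cast
    ring
  · exact mem_filter.2 ⟨hσ, (mem_filter.1 hρ).2⟩

lemma upperAdjForm_one_left (hc : c ≤ n) (g : Finset V → ℝ) :
    X.upperAdjForm c (fun _ => 1) g = c * ∑ σ ∈ X.K c, X.m σ * g σ := by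
  rw [Finset.mul_sum]
  refine Finset.sum_congr rfl fun σ hσ => ?_
  simp only [mul_one, ← Finset.sum_mul]
  rw [hX.sum_adjacent_m hc hσ, mul_assoc]

lemma upperAdjForm_self_le (hc : c ≤ n) (f : Finset V → ℝ) :
    X.upperAdjForm c f f ≤ c * X.normSq c f := by
  have hsq : ∀ g : Finset V → ℝ, X.upperAdjForm c (fun _ => 1) (fun σ => g σ * g σ) =
      c * X.normSq c g := fun g => hX.upperAdjForm_one_left hc _
  calc X.upperAdjForm c f f
      ≤ (X.upperAdjForm c (fun σ => f σ * f σ) (fun _ => 1) +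
          X.upperAdjForm c (fun _ => 1) (fun σ => f σ * f σ)) / 2 := by
        unfold upperAdjForm
        rw [← Finset.sum_add_distrib, Finset.sum_div]
        refine Finset.sum_le_sum fun σ _ => ?_
        rw [← Finset.sum_add_distrib, Finset.sum_div]
        refine Finset.sum_le_sum fun σ' hσ' => ?_
        have hm := hX.m_pos_of_mem_K (mem_filter.1 hσ').2
        nlinarith [mul_nonneg hm.le (sq_nonneg (f σ - f σ'))]
    _ = c * X.normSq c f := by rw [upperAdjForm_comm, hsq]; ring

lemma inn_Mup (f g : Finset V → ℝ) :
    X.inn c (X.Mup c f) g = (X.inn c f g + X.upperAdjForm c f g) / (c + 1) := by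
  unfold inn Mup upperAdjForm
  rw [add_div, Finset.sum_div, Finset.sum_div, ← Finset.sum_add_distrib]
  refine Finset.sum_congr rfl fun τ hτ => ?_
  have hm := (hX.m_pos_of_mem_K hτ).ne'
  rw [add_mul, mul_add, Finset.sum_mul, Finset.mul_sum, Finset.sum_div]
  congr 1
  · field_simp
  · refine Finset.sum_congr rfl fun τ' _ => ?_
    field_simp

lemma inn_Mup' (hc : c ≠ 0) (f g : Finset V → ℝ) :
    X.inn c (X.Mup' c f) g = X.upperAdjForm c f g / c := by
  have hlin : X.inn c (X.Mup' c f) g =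
      ((c : ℝ) + 1) / c * X.inn c (X.Mup c f) g - 1 / c * X.inn c f g := by
    unfold inn Mup'
    rw [Finset.mul_sum, Finset.mul_sum, ← Finset.sum_sub_distrib]
    exact Finset.sum_congr rfl fun _ _ => by ring
  have hc' : (c : ℝ) ≠ 0 := Nat.cast_ne_zero.2 hc
  rw [hlin, hX.inn_Mup]
  field_simp
  ring

lemma inn_d (f g : Finset V → ℝ) : X.inn (c + 1) (X.d c f) g = X.inn c f (X.dStar c g) := by
  unfold inn d dStar
  simp only [Finset.sum_mul, Finset.mul_sum]
  rw [Finset.sum_comm' (t' := X.K c) (s' := fun τ => (X.K (c + 1)).filter (τ ⊆ ·))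
    (by simp only [mem_filter]; tauto)]
  refine Finset.sum_congr rfl fun τ hτ => Finset.sum_congr rfl fun σ _ => ?_
  have hm := (hX.m_pos_of_mem_K hτ).ne'
  field_simp

lemma inn_d_d (hc : c ≤ n) (f g : Finset V → ℝ) :
    X.inn (c + 1) (X.d c f) (X.d c g) = X.inn c f g + X.upperAdjForm c f g := by
  have hexpand : ∀ ρ ∈ X.K (c + 1), X.m ρ * (X.d c f ρ * X.d c g ρ) =
      ∑ τ ∈ (X.K c).filter (· ⊆ ρ), (X.m ρ * (f τ * g τ) +
        ∑ τ' ∈ ((X.K c).filter (· ⊆ ρ)).erase τ, X.m ρ * f τ' * g τ) := by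
    intro ρ _
    unfold d
    rw [Finset.sum_mul_sum, Finset.sum_comm, Finset.mul_sum]
    refine Finset.sum_congr rfl fun τ hτ => ?_
    rw [Finset.mul_sum, ← Finset.add_sum_erase _ _ hτ]
    simp only [mul_assoc]
  unfold inn upperAdjForm
  rw [Finset.sum_congr rfl hexpand,
    Finset.sum_comm' (t' := X.K c) (s' := fun τ => (X.K (c + 1)).filter (τ ⊆ ·))
      (by simp only [mem_filter]; tauto), ← Finset.sum_add_distrib]
  refine Finset.sum_congr rfl fun τ hτ => ?_
  rw [Finset.sum_add_distrib, ← Finset.sum_mul, ← hX.m_eq_sum_cofaces hc hτ,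
    sum_adjacent_eq_sum_cofaces hτ fun ρ τ' => X.m ρ * f τ' * g τ]

lemma inn_Mup_eq_inn_d_d (hc : c ≤ n) (f g : Finset V → ℝ) :
    X.inn c (X.Mup c f) g = X.inn (c + 1) (X.d c f) (X.d c g) / (c + 1) := by
  rw [hX.inn_d_d hc, hX.inn_Mup]

lemma inn_Mup_self_nonneg (hc : c ≤ n) (f : Finset V → ℝ) : 0 ≤ X.inn c (X.Mup c f) f := by
  rw [hX.inn_Mup_eq_inn_d_d hc]
  exact div_nonneg (hX.normSq_nonneg _) (by positivity)

lemma cochainZero_dStar {φ : Finset V → ℝ} (hφ : X.cochainZero (c + 1) φ) :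
    X.cochainZero c (X.dStar c φ) := by
  unfold cochainZero dStar at *
  calc ∑ τ ∈ X.K c, X.m τ * ∑ σ ∈ (X.K (c + 1)).filter (τ ⊆ ·), X.m σ / X.m τ * φ σ
      = ∑ τ ∈ X.K c, ∑ σ ∈ (X.K (c + 1)).filter (τ ⊆ ·), X.m σ * φ σ := by
        refine Finset.sum_congr rfl fun τ hτ => ?_
        have hm := (hX.m_pos_of_mem_K hτ).ne'
        rw [Finset.mul_sum]
        exact Finset.sum_congr rfl fun σ _ => by field_simp
    _ = 0 := by rw [hX.sum_K_sum_cofaces, hφ, mul_zero]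

lemma cochainZero_Mup (hc : c ≤ n) {φ : Finset V → ℝ} (hφ : X.cochainZero c φ) :
    X.cochainZero c (X.Mup c φ) := by
  rw [cochainZero_iff_inn_one, hX.inn_Mup, cochainZero_iff_inn_one.1 hφ, upperAdjForm_comm,
    hX.upperAdjForm_one_left hc, show ∑ σ ∈ X.K c, X.m σ * φ σ = 0 from hφ]
  simp

lemma mem_link_K {τ η : Finset V} {j : ℕ} (hτη : Disjoint τ η) :
    η ∈ (X.link τ).K j ↔ τ ∪ η ∈ X.K (τ.card + j) := by
  rw [mem_K, mem_K, mem_link_faces, Finset.card_union_of_disjoint hτη,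
    Finset.inter_comm, ← Finset.disjoint_iff_inter_eq_empty]
  constructor
  · rintro ⟨⟨_, _, h⟩, rfl⟩
    exact ⟨h, rfl⟩
  · rintro ⟨h, hcard⟩
    exact ⟨⟨hX.mem_faces_of_subset h Finset.subset_union_right, hτη, h⟩, by omega⟩

lemma sum_link_cofaces {τ η : Finset V} (hτ : τ ∈ X.K c) (hη : η ∈ (X.link τ).faces) (j : ℕ)
    (F : Finset V → ℝ) :
    ∑ η' ∈ ((X.link τ).K j).filter (η ⊆ ·), F (τ ∪ η') =
      ∑ σ ∈ (X.K (c + j)).filter (τ ∪ η ⊆ ·), F σ := by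
  obtain ⟨hτf, rfl⟩ := mem_K.1 hτ
  refine Finset.sum_nbij' (τ ∪ ·) (· \ τ) (fun η' h => ?_) (fun σ h => ?_) (fun η' h => ?_)
    (fun σ h => ?_) (fun _ _ => rfl)
  · obtain ⟨hη', hηη'⟩ := mem_filter.1 h
    exact mem_filter.2 ⟨(hX.mem_link_K (disjoint_of_mem_link_faces (mem_K.1 hη').1)).1 hη',
      Finset.union_subset_union_right hηη'⟩
  · obtain ⟨hσ, hτησ⟩ := mem_filter.1 h
    have hτσ : τ ⊆ σ := Finset.subset_union_left.trans hτησ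
    refine mem_filter.2 ⟨(hX.mem_link_K Finset.disjoint_sdiff).2 ?_, ?_⟩
    · rwa [Finset.union_sdiff_of_subset hτσ]
    · exact Finset.subset_sdiff.2
        ⟨Finset.subset_union_right.trans hτησ, (disjoint_of_mem_link_faces hη).symm⟩
  · exact Finset.union_sdiff_cancel_left
      (disjoint_of_mem_link_faces (mem_K.1 (mem_filter.1 h).1).1)
  · exact Finset.union_sdiff_of_subset (Finset.subset_union_left.trans (mem_filter.1 h).2)

lemma empty_mem_link {τ : Finset V} (hτ : τ ∈ X.faces) : ∅ ∈ (X.link τ).faces :=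
  mem_link_faces.2 ⟨hX.1, Finset.empty_inter _, by rwa [Finset.union_empty]⟩

lemma sum_link_K {τ : Finset V} (hτ : τ ∈ X.K c) (j : ℕ) (F : Finset V → ℝ) :
    ∑ η ∈ (X.link τ).K j, F (τ ∪ η) = ∑ σ ∈ (X.K (c + j)).filter (τ ⊆ ·), F σ := by
  have h := hX.sum_link_cofaces hτ (hX.empty_mem_link (mem_K.1 hτ).1) j F
  rwa [Finset.filter_true_of_mem fun _ _ => Finset.empty_subset _, Finset.union_empty] at h

protected lemma link {τ : Finset V} (hτ : τ ∈ X.K c) (hc : c ≤ n) :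
    (X.link τ).IsWSC (n - c) := by
  obtain ⟨hτf, hτc⟩ := mem_K.1 hτ
  have hcard : ∀ {η}, η ∈ (X.link τ).faces → (τ ∪ η).card = c + η.card := fun h => by
    rw [Finset.card_union_of_disjoint (disjoint_of_mem_link_faces h), hτc]
  refine ⟨hX.empty_mem_link hτf, fun η η' hη hη' => ?_, fun η hη => ?_, fun η hη => ?_,
    fun η hη => hX.m_pos (mem_link_faces.1 hη).2.2, fun η hη hηn => ?_⟩
  · obtain ⟨hηf, hητ, hτη⟩ := mem_link_faces.1 hη
    refine mem_link_faces.2 ⟨hX.mem_faces_of_subset hηf hη', ?_,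
      hX.mem_faces_of_subset hτη (Finset.union_subset_union_right hη')⟩
    exact Finset.subset_empty.1 (hητ ▸ Finset.inter_subset_inter_right hη')
  · have := hX.2.2.1 (mem_link_faces.1 hη).2.2
    rw [hcard hη] at this
    omega
  · obtain ⟨ρ, hρ, hτηρ, hρc⟩ := hX.2.2.2.1 (mem_link_faces.1 hη).2.2
    have hτρ : τ ⊆ ρ := Finset.subset_union_left.trans hτηρ
    refine ⟨ρ \ τ, mem_link_faces.2 ⟨hX.mem_faces_of_subset hρ Finset.sdiff_subset,
      Finset.sdiff_inter_self _ _, by rwa [Finset.union_sdiff_of_subset hτρ]⟩,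
      Finset.subset_sdiff.2 ⟨Finset.subset_union_right.trans hτηρ,
        (disjoint_of_mem_link_faces hη).symm⟩, ?_⟩
    rw [Finset.card_sdiff_of_subset hτρ, hρc, hτc]
    omega
  · have hτη : τ ∪ η ∈ X.K (c + η.card) := mem_K.2 ⟨(mem_link_faces.1 hη).2.2, hcard hη⟩
    have hfilter : (X.link τ).faces.filter (fun η' => η ⊆ η' ∧ η'.card = η.card + 1) =
        ((X.link τ).K (η.card + 1)).filter (η ⊆ ·) := by
      ext η'
      simp only [mem_filter, mem_K]
      tauto
    change X.m (τ ∪ η) = ∑ η' ∈ _, X.m (τ ∪ η')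
    rw [hfilter, hX.sum_link_cofaces hτ hη, ← add_assoc,
      ← hX.m_eq_sum_cofaces (by omega) hτη]

lemma upperAdjForm_one_le_of_secondEig_le (hn : 1 ≤ n) {lam : ℝ} (hlam : X.secondEig ≤ lam)
    {f : Finset V → ℝ} (hf : ∑ v ∈ X.K 1, X.m v * f v = 0) :
    X.upperAdjForm 1 f f ≤ lam * X.normSq 1 f := by
  have hquot : ∀ ψ, X.inn 1 (X.Mup' 1 ψ) ψ / X.normSq 1 ψ =
      X.upperAdjForm 1 ψ ψ / X.normSq 1 ψ := fun ψ => by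
    rw [hX.inn_Mup' one_ne_zero, Nat.cast_one, div_one]
  by_cases hz : X.normSq 1 f = 0
  · simpa [hz] using hX.upperAdjForm_self_le hn f
  have hbdd : BddAbove {r : ℝ | ∃ ψ : Finset V → ℝ, X.normSq 1 ψ ≠ 0 ∧
      (∑ v ∈ X.K 1, X.m v * ψ v) = 0 ∧ r = X.inn 1 (X.Mup' 1 ψ) ψ / X.normSq 1 ψ} := by
    refine ⟨1, ?_⟩
    rintro r ⟨ψ, -, -, rfl⟩
    rw [hquot]
    exact div_le_one_of_le₀ (by simpa using hX.upperAdjForm_self_le hn ψ) (hX.normSq_nonneg ψ)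
  have h := (le_csSup hbdd ⟨f, hz, hf, rfl⟩).trans hlam
  rwa [hquot, div_le_iff₀ ((hX.normSq_nonneg f).lt_of_ne' hz)] at h

lemma upperAdjForm_one_le (hn : 1 ≤ n) {lam : ℝ} (h0 : 0 ≤ lam) (hlam : X.secondEig ≤ lam)
    (f : Finset V → ℝ) :
    X.upperAdjForm 1 f f ≤
      lam * X.normSq 1 f + (∑ v ∈ X.K 1, X.m v * f v) ^ 2 / X.m ∅ := by
  have hm := hX.m_pos hX.1
  have hmass : ∑ v ∈ X.K 1, X.m v = X.m ∅ := by
    rw [hX.m_eq_sum_cofaces (Nat.zero_le n) (mem_K.2 ⟨hX.1, rfl⟩),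
      Finset.filter_true_of_mem fun _ _ => Finset.empty_subset _]
  set a := (∑ v ∈ X.K 1, X.m v * f v) / X.m ∅
  set ψ : Finset V → ℝ := fun v => f v - a
  have hψ : ∑ v ∈ X.K 1, X.m v * ψ v = 0 := by
    simp only [ψ, mul_sub, Finset.sum_sub_distrib, ← Finset.sum_mul, hmass, a]
    field_simp
    ring
  have hf : f = fun v => ψ v + a := funext fun v => by simp [ψ]
  have hE : X.upperAdjForm 1 f f = X.upperAdjForm 1 ψ ψ + a ^ 2 * X.m ∅ := by
    rw [hf, upperAdjForm_add_const, upperAdjForm_comm ψ (fun _ => 1),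
      hX.upperAdjForm_one_left hn, hX.upperAdjForm_one_left hn, hψ]
    simp [hmass]
  have hN : X.normSq 1 f = X.normSq 1 ψ + a ^ 2 * X.m ∅ := by
    rw [hf, normSq_add_const, hψ, hmass]
    ring
  have hspec := hX.upperAdjForm_one_le_of_secondEig_le hn hlam hψ
  have hsq : (∑ v ∈ X.K 1, X.m v * f v) ^ 2 / X.m ∅ = a ^ 2 * X.m ∅ := by
    simp only [a]
    field_simp
  rw [hE, hN, hsq]
  nlinarith [mul_nonneg h0 (mul_nonneg (sq_nonneg a) hm.le)]

lemma sum_link_m_localize {τ : Finset V} (hτ : τ ∈ X.K c) (φ : Finset V → ℝ) :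
    ∑ v ∈ (X.link τ).K 1, (X.link τ).m v * localize φ τ v = X.m τ * X.dStar c φ τ := by
  have hm := (hX.m_pos_of_mem_K hτ).ne'
  refine (hX.sum_link_K hτ 1 fun σ => X.m σ * φ σ).trans ?_
  rw [dStar, Finset.mul_sum]
  exact Finset.sum_congr rfl fun σ _ => by field_simp

lemma upperAdjForm_link_localize_le {lam : ℝ} (h0 : 0 ≤ lam) (hexp : X.OneSided n lam)
    (hc : c < n) {τ : Finset V} (hτ : τ ∈ X.K c) (φ : Finset V → ℝ) :
    (X.link τ).upperAdjForm 1 (localize φ τ) (localize φ τ) ≤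
      lam * (X.link τ).normSq 1 (localize φ τ) + X.m τ * X.dStar c φ τ ^ 2 := by
  have h := (hX.link hτ hc.le).upperAdjForm_one_le (by omega) h0
    ((link_secondEig_le_mu hτ).trans (hexp c hc)) (localize φ τ)
  have hm := (hX.m_pos_of_mem_K hτ).ne'
  rwa [hX.sum_link_m_localize hτ, show (X.link τ).m ∅ = X.m τ by simp [link], mul_pow,
    sq (X.m τ), mul_assoc, mul_div_cancel_left₀ _ hm] at h

lemma sum_link_normSq_localize (φ : Finset V → ℝ) :
    ∑ τ ∈ X.K c, (X.link τ).normSq 1 (localize φ τ) = (c + 1) * X.normSq (c + 1) φ := by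
  refine (Finset.sum_congr rfl fun τ hτ =>
    hX.sum_link_K hτ 1 fun σ => X.m σ * (φ σ * φ σ)).trans ?_
  rw [hX.sum_K_sum_cofaces, Nat.choose_succ_self_right]
  push_cast
  rfl

lemma upperAdjForm_link_localize {τ : Finset V} (hτ : τ ∈ X.K c) (f g : Finset V → ℝ) :
    (X.link τ).upperAdjForm 1 (localize f τ) (localize g τ) =
      ∑ σ ∈ (X.K (c + 1)).filter (τ ⊆ ·),
        ∑ σ' ∈ (X.K (c + 1)).filter (fun σ' => τ ⊆ σ' ∧ σ ∪ σ' ∈ X.K (c + 1 + 1)),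
          X.m (σ ∪ σ') * f σ' * g σ := by
  refine (Finset.sum_congr rfl fun v hv => ?_).trans (hX.sum_link_K hτ 1 fun σ =>
    ∑ σ' ∈ (X.K (c + 1)).filter (fun σ' => τ ⊆ σ' ∧ σ ∪ σ' ∈ X.K (c + 1 + 1)),
      X.m (σ ∪ σ') * f σ' * g σ)
  rw [← Finset.filter_filter, Finset.sum_filter, Finset.sum_filter]
  refine (Finset.sum_congr rfl fun w hw => ?_).trans (hX.sum_link_K hτ 1 fun σ' =>
    if (τ ∪ v) ∪ σ' ∈ X.K (c + 1 + 1) then X.m ((τ ∪ v) ∪ σ') * f σ' * g (τ ∪ v) else 0)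
  have hu : τ ∪ v ∪ (τ ∪ w) = τ ∪ (v ∪ w) := (Finset.union_union_distrib_left _ _ _).symm
  have hd : Disjoint τ (v ∪ w) := Finset.disjoint_union_right.2
    ⟨disjoint_of_mem_link_faces (mem_K.1 hv).1, disjoint_of_mem_link_faces (mem_K.1 hw).1⟩
  rw [hu, ← (mem_K.1 hτ).2, add_assoc]
  exact if_congr (hX.mem_link_K hd) rfl rfl

lemma sum_K_sum_adjacent_cofaces (H : Finset V → Finset V → ℝ) :
    ∑ τ ∈ X.K c, ∑ σ ∈ (X.K (c + 1)).filter (τ ⊆ ·),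
        ∑ σ' ∈ (X.K (c + 1)).filter (fun σ' => τ ⊆ σ' ∧ σ ∪ σ' ∈ X.K (c + 1 + 1)), H σ σ' =
      ∑ σ ∈ X.K (c + 1), ∑ σ' ∈ (X.K (c + 1)).filter (fun σ' => σ ∪ σ' ∈ X.K (c + 1 + 1)),
        H σ σ' := by
  rw [Finset.sum_comm' (t' := X.K (c + 1)) (s' := fun σ => (X.K c).filter (· ⊆ σ))
    (by simp only [mem_filter]; tauto)]
  refine Finset.sum_congr rfl fun σ hσ => ?_
  rw [Finset.sum_comm' (t' := (X.K (c + 1)).filter (fun σ' => σ ∪ σ' ∈ X.K (c + 1 + 1)))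
    (s' := fun σ' => (X.K c).filter (fun τ => τ ⊆ σ ∩ σ'))
    (by simp only [mem_filter, Finset.subset_inter_iff]; tauto)]
  refine Finset.sum_congr rfl fun σ' hσ' => ?_
  obtain ⟨hσ', hu⟩ := mem_filter.1 hσ'
  have hcard := Finset.card_union_add_card_inter σ σ'
  rw [(mem_K.1 hσ).2, (mem_K.1 hσ').2, (mem_K.1 hu).2] at hcard
  have hint : σ ∩ σ' ∈ X.K c :=
    mem_K.2 ⟨hX.mem_faces_of_subset (mem_K.1 hσ).1 Finset.inter_subset_left, by omega⟩
  rw [Finset.sum_const, hX.card_K_filter_subset hint, Nat.choose_self, one_smul]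

lemma sum_link_upperAdjForm_localize (f g : Finset V → ℝ) :
    ∑ τ ∈ X.K c, (X.link τ).upperAdjForm 1 (localize f τ) (localize g τ) =
      X.upperAdjForm (c + 1) f g := by
  rw [Finset.sum_congr rfl fun τ hτ => hX.upperAdjForm_link_localize hτ f g,
    hX.sum_K_sum_adjacent_cofaces]
  rfl

lemma normSq_Mup_le (hc : c ≤ n) {b : ℝ} (hb : 0 ≤ b)
    (hray : ∀ ψ, X.cochainZero c ψ → X.inn c (X.Mup c ψ) ψ ≤ b * X.normSq c ψ)
    {φ : Finset V → ℝ} (hφ : X.cochainZero c φ) :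
    X.normSq c (X.Mup c φ) ≤ b ^ 2 * X.normSq c φ := by
  set ψ := X.Mup c φ
  have hd : ∀ f g, X.inn c (X.Mup c f) g = X.inn (c + 1) (X.d c f) (X.d c g) / (c + 1) :=
    hX.inn_Mup_eq_inn_d_d hc
  have hCS : X.normSq c ψ ^ 2 ≤ X.inn c (X.Mup c φ) φ * X.inn c (X.Mup c ψ) ψ := by
    rw [show X.normSq c ψ = X.inn c (X.Mup c φ) ψ from rfl, hd, hd, hd, div_pow,
      div_mul_div_comm, ← sq]
    gcongr
    exact hX.inn_sq_le _ _
  refine le_of_sq_le_mul (mul_nonneg (sq_nonneg b) (hX.normSq_nonneg φ)) ?_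
  calc X.normSq c ψ ^ 2
      ≤ X.inn c (X.Mup c φ) φ * X.inn c (X.Mup c ψ) ψ := hCS
    _ ≤ b * X.normSq c φ * (b * X.normSq c ψ) :=
      mul_le_mul (hray φ hφ) (hray ψ (hX.cochainZero_Mup hc hφ))
        (hX.inn_Mup_self_nonneg hc ψ) (mul_nonneg hb (hX.normSq_nonneg φ))
    _ = b ^ 2 * X.normSq c φ * X.normSq c ψ := by ring

lemma normSq_dStar_le (hc : c ≤ n) {b : ℝ} (hb : 0 ≤ b) {φ : Finset V → ℝ}
    (hray : X.inn c (X.Mup c (X.dStar c φ)) (X.dStar c φ) ≤ b * X.normSq c (X.dStar c φ)) :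
    X.normSq c (X.dStar c φ) ≤ (c + 1) * b * X.normSq (c + 1) φ := by
  set ψ := X.dStar c φ
  have hdψ : X.normSq (c + 1) (X.d c ψ) = (c + 1) * X.inn c (X.Mup c ψ) ψ := by
    rw [hX.inn_Mup_eq_inn_d_d hc]
    field_simp
    rfl
  have hCS : X.normSq c ψ ^ 2 ≤ X.normSq (c + 1) (X.d c ψ) * X.normSq (c + 1) φ := by
    rw [show X.normSq c ψ = X.inn (c + 1) (X.d c ψ) φ from (hX.inn_d ψ φ).symm]
    exact hX.inn_sq_le _ _
  refine le_of_sq_le_mul (by have := hX.normSq_nonneg (c := c + 1) φ; positivity) ?_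
  calc X.normSq c ψ ^ 2
      ≤ (c + 1) * X.inn c (X.Mup c ψ) ψ * X.normSq (c + 1) φ := by rwa [hdψ] at hCS
    _ ≤ (c + 1) * (b * X.normSq c ψ) * X.normSq (c + 1) φ := by
      gcongr
      exact hX.normSq_nonneg φ
    _ = (c + 1) * b * X.normSq (c + 1) φ * X.normSq c ψ := by ring

lemma normSq_dStar_zero {φ : Finset V → ℝ} (hφ : X.cochainZero 1 φ) :
    X.normSq 0 (X.dStar 0 φ) = 0 := by
  have h := hX.cochainZero_dStar hφ
  simp only [cochainZero, normSq, inn, hX.K_zero, Finset.sum_singleton] at h ⊢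
  rw [(mul_eq_zero.1 h).resolve_left (hX.m_pos hX.1).ne', mul_zero, mul_zero]

variable {lam : ℝ} (h0 : 0 ≤ lam) (hexp : X.OneSided n lam)
include h0 hexp

lemma upperAdjForm_le_of_oneSided {k : ℕ} (hk : k < n) (φ : Finset V → ℝ) :
    X.upperAdjForm (k + 1) φ φ ≤
      lam * ((k + 1) * X.normSq (k + 1) φ) + X.normSq k (X.dStar k φ) := by
  rw [← hX.sum_link_upperAdjForm_localize, ← hX.sum_link_normSq_localize, Finset.mul_sum,
    normSq, inn, ← Finset.sum_add_distrib]
  refine Finset.sum_le_sum fun τ hτ => ?_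
  have h := hX.upperAdjForm_link_localize_le h0 hexp hk hτ φ
  linarith [show X.dStar k φ τ ^ 2 = X.dStar k φ τ * X.dStar k φ τ from sq _]

lemma inn_Mup_self_le_of_normSq_dStar_le {k : ℕ} (hk : k < n) {φ : Finset V → ℝ}
    (hS : X.normSq k (X.dStar k φ) ≤ (k + k * (k + 1) * lam) * X.normSq (k + 1) φ) :
    X.inn (k + 1) (X.Mup (k + 1) φ) φ ≤
      ((k + 1) / (k + 2) + (k + 1) * lam) * X.normSq (k + 1) φ := by
  have hE := hX.upperAdjForm_le_of_oneSided h0 hexp hk φ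
  have hN := mul_nonneg h0 (hX.normSq_nonneg (c := k + 1) φ)
  have hβ : ((k + 1) / (k + 2) + (k + 1) * lam) * ((k : ℝ) + 1 + 1) =
      (k + 1) + (k + 1) * (k + 2) * lam := by
    field_simp
    ring
  rw [hX.inn_Mup, div_le_iff₀ (by positivity), Nat.cast_succ, mul_right_comm, hβ]
  change X.normSq (k + 1) φ + _ ≤ _
  nlinarith [mul_nonneg (by positivity : (0 : ℝ) ≤ k + 1) hN]

theorem inn_Mup_self_le : ∀ k < n, ∀ φ : Finset V → ℝ, X.cochainZero (k + 1) φ →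
    X.inn (k + 1) (X.Mup (k + 1) φ) φ ≤
      ((k + 1) / (k + 2) + (k + 1) * lam) * X.normSq (k + 1) φ := by
  intro k
  induction k with
  | zero =>
    refine fun hn φ hφ => hX.inn_Mup_self_le_of_normSq_dStar_le h0 hexp hn ?_
    rw [hX.normSq_dStar_zero hφ]
    simp
  | succ j ih =>
    refine fun hn φ hφ => hX.inn_Mup_self_le_of_normSq_dStar_le h0 hexp hn ?_
    have hb : (0 : ℝ) ≤ (j + 1) / (j + 2) + (j + 1) * lam := by positivity
    refine (hX.normSq_dStar_le hn.le hb
      (ih (by omega) _ (hX.cochainZero_dStar hφ))).trans (le_of_eq ?_)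
    push_cast
    field_simp
    ring

end IsWSC

end WSC

open WSC

theorem mixing_lazy_walk_general {V : Type*} [DecidableEq V] (X : WSC V) (n : ℕ)
    (hX : X.IsWSC n) (lam : ℝ) (h0 : 0 ≤ lam)
    (hexp : X.OneSided n lam) (k : ℕ) (hk : k < n) (φ : Finset V → ℝ)
    (hφ : X.cochainZero (k + 1) φ) :
    X.norm (k + 1) (X.Mup (k + 1) φ) ≤
      (((k : ℝ) + 1) / ((k : ℝ) + 2) + ((k : ℝ) + 1) * lam) * X.norm (k + 1) φ := by
  have hβ : 0 ≤ ((k : ℝ) + 1) / ((k : ℝ) + 2) + ((k : ℝ) + 1) * lam := by positivity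
  have h := hX.normSq_Mup_le hk hβ (hX.inn_Mup_self_le h0 hexp k hk) hφ
  rw [WSC.norm, WSC.norm, ← Real.sqrt_sq hβ, ← Real.sqrt_mul (sq_nonneg _)]
  exact Real.sqrt_le_sqrt h

/-- Let `0 ≤ λ ≤ 1`. If `X` is a one-sided `λ`-local spectral
expander, then for every `0 ≤ k ≤ n-1` and every `φ ∈ C^k_0(X,ℝ)`,
`‖M⁺_k φ‖ ≤ ((k+1)/(k+2) + (k+1)λ) ‖φ‖`. -/
theorem mixing_lazy_walk {V : Type*} [DecidableEq V] (X : WSC V) (n : ℕ)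
    (hX : X.IsWSC n) (lam : ℝ) (h0 : 0 ≤ lam) (h1 : lam ≤ 1)
    (hexp : X.OneSided n lam) (k : ℕ) (hk : k < n) (φ : Finset V → ℝ)
    (hφ : X.cochainZero (k + 1) φ) :
    X.norm (k + 1) (X.Mup (k + 1) φ) ≤
      (((k : ℝ) + 1) / ((k : ℝ) + 2) + ((k : ℝ) + 1) * lam) * X.norm (k + 1) φ :=
  mixing_lazy_walk_general X n hX lam h0 hexp k hk φ hφ
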